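/- Let 1 < g₀ < g₁, set δ := (g₁ − g₀)/3 > 0 and s_k := 2^{2^k} for k ∈ ℕ₀, and define g(s) := s^{g₀−1+δ} for 0 < s < 2, g(s) := s_{2k+1}^{−δ}·s^{g₁−1} for s_{2k} ≤ s < s_{2k+1}, and g(s) := s_{2k+2}^{δ}·s^{g₀−1} for s_{2k+1} ≤ s < s_{2k+2} (k ∈ ℕ₀). Then g is continuous and locally Lipschitz on (0, ∞), and at every point s > 0 where g is differentiable it satisfies g₀ − 1 ≤ s·g′(s)/g(s) ≤ g₁ − 1. -/

import Mathlib

/-- `s_k = 2^{2^k}`. -/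
noncomputable def skSeq (k : ℕ) : ℝ := (2 : ℝ) ^ (2 ^ k : ℕ)

/-- The concrete oscillating example: with `δ = (g₁ − g₀)/3`,
`g(s) = s^{g₀−1+δ}` for `0 < s < 2`, `g(s) = s_{2k+1}^{−δ} s^{g₁−1}` for `s_{2k} ≤ s < s_{2k+1}`
and `g(s) = s_{2k+2}^{δ} s^{g₀−1}` for `s_{2k+1} ≤ s < s_{2k+2}`.  (For `s ≥ 2` the index
`⌊log₂ log₂ s⌋` is the unique `j` with `s_j ≤ s < s_{j+1}`.) -/
noncomputable def gEx (g₀ g₁ : ℝ) (s : ℝ) : ℝ :=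
  if s < 2 then s ^ (g₀ - 1 + (g₁ - g₀) / 3)
  else if Nat.floor (Real.logb 2 (Real.logb 2 s)) % 2 = 0 then
    skSeq (Nat.floor (Real.logb 2 (Real.logb 2 s)) + 1) ^ (-((g₁ - g₀) / 3)) * s ^ (g₁ - 1)
  else
    skSeq (Nat.floor (Real.logb 2 (Real.logb 2 s)) + 1) ^ ((g₁ - g₀) / 3) * s ^ (g₀ - 1)

/-!
On `(0, 2]` and on every `[s_j, s_{j+1}]` the function `g` is a power function `C s^α`, with
`α = g₀ - 1 + δ` on `(0, 2]` and `α` alternating between `g₁ - 1` and `g₀ - 1` afterwards. The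
constants `s_{j+1}^{∓δ}` make consecutive pieces agree at the break points, because
`s_{j+2} = s_{j+1}^2` and `g₁ - g₀ = 3δ`. Hence `g` is continuous, and at every `s > 0` it has the
right derivative `α g(s) / s` of the piece starting at `s`. Where `g` is differentiable this is
`g'(s)`, so `s g'(s) / g(s) = α ∈ [g₀ - 1, g₁ - 1]`; and a continuous function whose right
derivative is bounded on a compact interval is Lipschitz there.
-/

open Real Set

lemma lipschitzOnWith_Icc_of_hasDerivWithinAt_Ici {E : Type*} [NormedAddCommGroup E]
    [NormedSpace ℝ E] {f f' : ℝ → E} {a b C : ℝ}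
    (hf : ContinuousOn f (Icc a b))
    (hf' : ∀ x ∈ Ico a b, HasDerivWithinAt f (f' x) (Ici x) x)
    (bound : ∀ x ∈ Ico a b, ‖f' x‖ ≤ C) :
    LipschitzOnWith C.toNNReal f (Icc a b) := by
  have key : ∀ x ∈ Icc a b, ∀ y ∈ Icc a b, x ≤ y → dist (f y) (f x) ≤ C * dist y x := by
    intro x hx y hy hxy
    rw [dist_eq_norm, Real.dist_eq, abs_of_nonneg (sub_nonneg.2 hxy)]
    exact norm_image_sub_le_of_norm_deriv_right_le_segment
      (hf.mono (Icc_subset_Icc hx.1 hy.2))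
      (fun z hz => hf' z ⟨hx.1.trans hz.1, hz.2.trans_le hy.2⟩)
      (fun z hz => bound z ⟨hx.1.trans hz.1, hz.2.trans_le hy.2⟩) y ⟨hxy, le_rfl⟩
  refine LipschitzOnWith.of_dist_le' fun x hx y hy => ?_
  rcases le_total x y with hxy | hyx
  · rw [dist_comm, dist_comm x]
    exact key x hx y hy hxy
  · exact key y hy x hx hyx

lemma hasDerivWithinAt_Ici_of_eqOn_Ico_rpow {f : ℝ → ℝ} {C α s b : ℝ} (hs : 0 < s)
    (hb : s < b) (h : EqOn f (fun x => C * x ^ α) (Ico s b)) :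
    HasDerivWithinAt f (α * f s / s) (Ici s) s := by
  have hpow : HasDerivAt (fun x => C * x ^ α) (C * (α * s ^ (α - 1))) s :=
    (hasDerivAt_rpow_const (Or.inl hs.ne')).const_mul C
  have hval : C * (α * s ^ (α - 1)) = α * f s / s := by
    rw [h ⟨le_rfl, hb⟩, rpow_sub_one hs.ne']
    field_simp
  exact hval ▸ hpow.hasDerivWithinAt.congr_of_eventuallyEq
    (h.eventuallyEq_of_mem (Ico_mem_nhdsGE hb)) (h ⟨le_rfl, hb⟩)

lemma skSeq_pos (k : ℕ) : 0 < skSeq k := by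
  unfold skSeq
  positivity

lemma skSeq_zero : skSeq 0 = 2 := by
  norm_num [skSeq]

lemma skSeq_succ (k : ℕ) : skSeq (k + 1) = skSeq k ^ 2 := by
  rw [skSeq, skSeq, pow_succ, pow_mul]

lemma skSeq_eq_rpow (k : ℕ) : skSeq k = (2 : ℝ) ^ ((2 : ℝ) ^ (k : ℝ)) := by
  simp [skSeq, ← rpow_natCast]

lemma skSeq_strictMono : StrictMono skSeq :=
  strictMono_nat_of_lt_succ fun _ => pow_lt_pow_right₀ one_lt_two (Nat.pow_lt_pow_succ one_lt_two)

lemma two_le_skSeq (k : ℕ) : 2 ≤ skSeq k :=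
  skSeq_zero ▸ skSeq_strictMono.monotone k.zero_le

lemma floor_logb_logb_eq_iff {s : ℝ} (hs : 2 ≤ s) (j : ℕ) :
    ⌊logb 2 (logb 2 s)⌋₊ = j ↔ skSeq j ≤ s ∧ s < skSeq (j + 1) := by
  have hlog : 1 ≤ logb 2 s := by
    rwa [le_logb_iff_rpow_le one_lt_two (by linarith), rpow_one]
  rw [Nat.floor_eq_iff (logb_nonneg one_lt_two hlog),
    le_logb_iff_rpow_le one_lt_two (by linarith), logb_lt_iff_lt_rpow one_lt_two (by linarith),
    le_logb_iff_rpow_le one_lt_two (by linarith), logb_lt_iff_lt_rpow one_lt_two (by linarith),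
    skSeq_eq_rpow, skSeq_eq_rpow, Nat.cast_succ]

noncomputable def gExPieceExp (g₀ g₁ : ℝ) (j : ℕ) : ℝ :=
  if j % 2 = 0 then g₁ - 1 else g₀ - 1

noncomputable def gExPieceCoeff (g₀ g₁ : ℝ) (j : ℕ) : ℝ :=
  skSeq (j + 1) ^ (if j % 2 = 0 then -((g₁ - g₀) / 3) else (g₁ - g₀) / 3)

/-- The elasticity `s g'(s) / g(s)` of `gEx`, taken from the right at the break points. -/
noncomputable def gExElasticity (g₀ g₁ s : ℝ) : ℝ :=
  if s < 2 then g₀ - 1 + (g₁ - g₀) / 3 else gExPieceExp g₀ g₁ ⌊logb 2 (logb 2 s)⌋₊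

section

variable {g₀ g₁ : ℝ}

lemma gExElasticity_mem_Icc (hg : g₀ ≤ g₁) (s : ℝ) :
    gExElasticity g₀ g₁ s ∈ Icc (g₀ - 1) (g₁ - 1) := by
  unfold gExElasticity gExPieceExp
  split_ifs <;> constructor <;> linarith

lemma gEx_pos {s : ℝ} (hs : 0 < s) : 0 < gEx g₀ g₁ s := by
  have := skSeq_pos (⌊logb 2 (logb 2 s)⌋₊ + 1)
  unfold gEx
  split_ifs <;> positivity

lemma gEx_eq_of_mem_Ico {j : ℕ} {s : ℝ} (hs : s ∈ Ico (skSeq j) (skSeq (j + 1))) :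
    gEx g₀ g₁ s = gExPieceCoeff g₀ g₁ j * s ^ gExPieceExp g₀ g₁ j := by
  have h2s : 2 ≤ s := (two_le_skSeq j).trans hs.1
  rw [gEx, if_neg h2s.not_gt, (floor_logb_logb_eq_iff h2s j).2 hs, gExPieceCoeff, gExPieceExp]
  split_ifs <;> rfl

lemma gExPiece_zero_two :
    gExPieceCoeff g₀ g₁ 0 * 2 ^ gExPieceExp g₀ g₁ 0 = (2 : ℝ) ^ (g₀ - 1 + (g₁ - g₀) / 3) := by
  rw [gExPieceCoeff, gExPieceExp, if_pos rfl, if_pos rfl, skSeq_succ, skSeq_zero,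
    ← rpow_natCast, ← rpow_mul zero_le_two, ← rpow_add zero_lt_two]
  ring_nf

lemma gExPiece_succ_skSeq (j : ℕ) :
    gExPieceCoeff g₀ g₁ (j + 1) * skSeq (j + 1) ^ gExPieceExp g₀ g₁ (j + 1) =
      gExPieceCoeff g₀ g₁ j * skSeq (j + 1) ^ gExPieceExp g₀ g₁ j := by
  have hS := skSeq_pos (j + 1)
  rw [gExPieceCoeff, gExPieceCoeff, gExPieceExp, gExPieceExp, skSeq_succ (j + 1),
    ← rpow_natCast, ← rpow_mul hS.le]
  by_cases hj : j % 2 = 0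
  · have hj1 : (j + 1) % 2 ≠ 0 := by omega
    rw [if_pos hj, if_pos hj, if_neg hj1, if_neg hj1, ← rpow_add hS, ← rpow_add hS]
    ring_nf
  · have hj1 : (j + 1) % 2 = 0 := by omega
    rw [if_neg hj, if_neg hj, if_pos hj1, if_pos hj1, ← rpow_add hS, ← rpow_add hS]
    ring_nf

lemma gEx_eq_of_le_two {s : ℝ} (hs : s ≤ 2) : gEx g₀ g₁ s = s ^ (g₀ - 1 + (g₁ - g₀) / 3) := by
  rcases hs.lt_or_eq with hs | rfl
  · exact if_pos hs
  · rw [← gExPiece_zero_two,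
      gEx_eq_of_mem_Ico ⟨skSeq_zero.le, skSeq_zero ▸ skSeq_strictMono zero_lt_one⟩]

lemma gEx_eq_of_mem_Icc {j : ℕ} {s : ℝ} (hs : s ∈ Icc (skSeq j) (skSeq (j + 1))) :
    gEx g₀ g₁ s = gExPieceCoeff g₀ g₁ j * s ^ gExPieceExp g₀ g₁ j := by
  rcases hs.2.lt_or_eq with h | rfl
  · exact gEx_eq_of_mem_Ico ⟨hs.1, h⟩
  · rw [← gExPiece_succ_skSeq,
      gEx_eq_of_mem_Ico ⟨le_rfl, skSeq_strictMono (j + 1).lt_succ_self⟩]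

lemma exists_eqOn_Ico_rpow_gExElasticity {s : ℝ} :
    ∃ C b, s < b ∧ EqOn (gEx g₀ g₁) (fun x => C * x ^ gExElasticity g₀ g₁ s) (Ico s b) := by
  by_cases hs : s < 2
  · refine ⟨1, 2, hs, fun x hx => ?_⟩
    simp only [gExElasticity, if_pos hs, one_mul]
    exact if_pos hx.2
  · set j := ⌊logb 2 (logb 2 s)⌋₊
    obtain ⟨hj, hj'⟩ := (floor_logb_logb_eq_iff (not_lt.1 hs) j).1 rfl
    refine ⟨gExPieceCoeff g₀ g₁ j, skSeq (j + 1), hj', fun x hx => ?_⟩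
    simp only [gExElasticity, if_neg hs]
    exact gEx_eq_of_mem_Ico ⟨hj.trans hx.1, hx.2⟩

lemma exists_eqOn_Ioc_rpow_gEx {s : ℝ} (hs : 0 < s) :
    ∃ C α a : ℝ, a < s ∧ EqOn (gEx g₀ g₁) (fun x => C * x ^ α) (Ioc a s) := by
  by_cases h2 : s ≤ 2
  · exact ⟨1, g₀ - 1 + (g₁ - g₀) / 3, 0, hs, fun x hx =>
      (gEx_eq_of_le_two (hx.2.trans h2)).trans (one_mul _).symm⟩
  set j := ⌊logb 2 (logb 2 s)⌋₊
  obtain ⟨hj, hj'⟩ := (floor_logb_logb_eq_iff (not_le.1 h2).le j).1 rfl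
  rcases hj.lt_or_eq with hj | hj
  · exact ⟨gExPieceCoeff g₀ g₁ j, gExPieceExp g₀ g₁ j, skSeq j, hj,
      fun x hx => gEx_eq_of_mem_Icc ⟨hx.1.le, hx.2.trans hj'.le⟩⟩
  · obtain _ | i := j
    · rw [skSeq_zero] at hj
      linarith
    · exact ⟨gExPieceCoeff g₀ g₁ i, gExPieceExp g₀ g₁ i, skSeq i,
        hj ▸ skSeq_strictMono i.lt_succ_self, fun x hx => gEx_eq_of_mem_Icc ⟨hx.1.le, hj ▸ hx.2⟩⟩

lemma gEx_hasDerivWithinAt_Ici {s : ℝ} (hs : 0 < s) :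
    HasDerivWithinAt (gEx g₀ g₁) (gExElasticity g₀ g₁ s * gEx g₀ g₁ s / s) (Ici s) s := by
  obtain ⟨C, b, hb, h⟩ := exists_eqOn_Ico_rpow_gExElasticity (g₀ := g₀) (g₁ := g₁) (s := s)
  exact hasDerivWithinAt_Ici_of_eqOn_Ico_rpow hs hb h

lemma gEx_continuousWithinAt_Iic {s : ℝ} (hs : 0 < s) :
    ContinuousWithinAt (gEx g₀ g₁) (Iic s) s := by
  obtain ⟨C, α, a, ha, h⟩ := exists_eqOn_Ioc_rpow_gEx (g₀ := g₀) (g₁ := g₁) hs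
  exact ((continuousAt_rpow_const s α (Or.inl hs.ne')).const_mul C).continuousWithinAt
    |>.congr_of_eventuallyEq (h.eventuallyEq_of_mem (Ioc_mem_nhdsLE ha)) (h ⟨ha, le_rfl⟩)

lemma continuousOn_gEx : ContinuousOn (gEx g₀ g₁) (Ioi 0) := fun _ hs =>
  (continuousAt_iff_continuous_left_right.2 ⟨gEx_continuousWithinAt_Iic hs,
    (gEx_hasDerivWithinAt_Ici hs).continuousWithinAt⟩).continuousWithinAt

lemma gEx_lipschitzOnWith_Icc (hg : g₀ ≤ g₁) {a : ℝ} (ha : 0 < a) (b : ℝ) :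
    ∃ C, LipschitzOnWith C (gEx g₀ g₁) (Icc a b) := by
  have hcont : ContinuousOn (gEx g₀ g₁) (Icc a b) :=
    continuousOn_gEx.mono fun x hx => ha.trans_le hx.1
  obtain ⟨M, hM⟩ := isCompact_Icc.exists_bound_of_continuousOn hcont
  refine ⟨_, lipschitzOnWith_Icc_of_hasDerivWithinAt_Ici hcont
    (fun x hx => gEx_hasDerivWithinAt_Ici (ha.trans_le hx.1))
    (C := max |g₀ - 1| |g₁ - 1| * M / a) fun x hx => ?_⟩
  have hgx : |gEx g₀ g₁ x| ≤ M := hM x (Ico_subset_Icc_self hx)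
  obtain ⟨he₀, he₁⟩ := gExElasticity_mem_Icc hg x
  have hM₀ : 0 ≤ M := (abs_nonneg _).trans hgx
  rw [norm_div, norm_mul, Real.norm_eq_abs, Real.norm_eq_abs, Real.norm_eq_abs]
  gcongr
  · exact abs_le_max_abs_abs he₀ he₁
  · exact hx.1.trans (le_abs_self x)

lemma gEx_locallyLipschitzOn (hg : g₀ ≤ g₁) : LocallyLipschitzOn (Ioi 0) (gEx g₀ g₁) := by
  intro s hs
  obtain ⟨C, hC⟩ := gEx_lipschitzOnWith_Icc hg (half_pos hs) (2 * s)
  exact ⟨C, _, mem_nhdsWithin_of_mem_nhds (Icc_mem_nhds (half_lt_self hs) (by linarith [hs.out])),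
    hC⟩

end

theorem stmt_17_general (g₀ g₁ : ℝ) (hgg : g₀ < g₁) :
    ContinuousOn (gEx g₀ g₁) (Set.Ioi 0) ∧
    (∀ K : Set ℝ, K ⊆ Set.Ioi 0 → IsCompact K →
      ∃ C : NNReal, LipschitzOnWith C (gEx g₀ g₁) K) ∧
    (∀ s : ℝ, 0 < s → DifferentiableAt ℝ (gEx g₀ g₁) s →
      g₀ - 1 ≤ s * deriv (gEx g₀ g₁) s / gEx g₀ g₁ s ∧
      s * deriv (gEx g₀ g₁) s / gEx g₀ g₁ s ≤ g₁ - 1) := by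
  refine ⟨continuousOn_gEx, fun K hK hKc =>
    ((gEx_locallyLipschitzOn hgg.le).mono hK).exists_lipschitzOnWith_of_compact hKc,
    fun s hs hdiff => ?_⟩
  have hderiv : deriv (gEx g₀ g₁) s = gExElasticity g₀ g₁ s * gEx g₀ g₁ s / s :=
    (uniqueDiffOn_Ici s s self_mem_Ici).eq_deriv _ hdiff.hasDerivAt.hasDerivWithinAt
      (gEx_hasDerivWithinAt_Ici hs)
  have hg := (gEx_pos (g₀ := g₀) (g₁ := g₁) hs).ne'
  have helasticity : s * deriv (gEx g₀ g₁) s / gEx g₀ g₁ s = gExElasticity g₀ g₁ s := by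
    rw [hderiv]
    field_simp
  rw [helasticity]
  exact gExElasticity_mem_Icc hgg.le s

/-- The concrete example `gEx` is continuous and locally Lipschitz on `(0,∞)`, and at every
point of differentiability it satisfies `g₀ − 1 ≤ s g'(s)/g(s) ≤ g₁ − 1`. -/
theorem stmt_17 (g₀ g₁ : ℝ) (hg₀ : 1 < g₀) (hgg : g₀ < g₁) :
    ContinuousOn (gEx g₀ g₁) (Set.Ioi 0) ∧
    (∀ K : Set ℝ, K ⊆ Set.Ioi 0 → IsCompact K →
      ∃ C : NNReal, LipschitzOnWith C (gEx g₀ g₁) K) ∧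
    (∀ s : ℝ, 0 < s → DifferentiableAt ℝ (gEx g₀ g₁) s →
      g₀ - 1 ≤ s * deriv (gEx g₀ g₁) s / gEx g₀ g₁ s ∧
      s * deriv (gEx g₀ g₁) s / gEx g₀ g₁ s ≤ g₁ - 1) :=
  stmt_17_general g₀ g₁ hgg
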